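/- Let ρ̂ be a full-rank density matrix on ℂ^d, let n ≥ 1, let F_n be a nonempty set of density matrices on ℂ^{d^n}, let F' be a set of density matrices on ℂ^{d'}, and let E : M_{d^n}(ℂ) → M_{d'}(ℂ) be a positive trace-preserving linear map with E(ω) ∈ F' for all ω ∈ F_n. If a unit vector ψ ∈ ℂ^{d'} and ε ≥ 0 satisfy ⟨ψ, E(ρ̂^{⊗n}) ψ⟩ ≥ 1 − ε, then ε ≥ λ_min(ρ̂)^n · (1 − f_ψ), where f_ψ := sup_{ω ∈ F'} ⟨ψ, ω ψ⟩. Equivalently, if ε > 0 and λ_min(ρ̂) < 1, then n ≥ log((1 − f_ψ)/ε) / log(1/λ_min(ρ̂)). (Theorem 2, deterministic case: lower bound on distillation overhead.) -/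

import Mathlib

open scoped Matrix ComplexOrder

noncomputable section

/-- A density matrix: a positive semidefinite complex matrix with unit trace. -/
def IsDensity {n : Type*} [Fintype n] (A : Matrix n n ℂ) : Prop :=
  A.PosSemidef ∧ A.trace = 1

/-- The smallest eigenvalue of a Hermitian matrix (`0` by convention otherwise). -/
noncomputable def minEig {n : Type*} [Fintype n] [DecidableEq n] (A : Matrix n n ℂ) : ℝ :=
  letI := Classical.propDecidable A.IsHermitian
  if h : A.IsHermitian then ⨅ i, h.eigenvalues i else 0

/-- The overlap `⟨ψ, A ψ⟩` (as a real number). -/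
noncomputable def overlap {n : Type*} [Fintype n] (A : Matrix n n ℂ) (ψ : n → ℂ) : ℝ :=
  (dotProduct (star ψ) (A.mulVec ψ)).re

/-- `f_ψ = sup_{ω ∈ F} ⟨ψ, ω ψ⟩`, with the convention `sup ∅ = 0`. -/
noncomputable def maxOverlap {n : Type*} [Fintype n] (F : Set (Matrix n n ℂ)) (ψ : n → ℂ) : ℝ :=
  sSup ((fun ω => overlap ω ψ) '' F)

/-- A positive map: it sends positive semidefinite matrices to positive semidefinite matrices. -/
def PosMap {n m : Type*} [Fintype n] [Fintype m]
    (Φ : Matrix n n ℂ →ₗ[ℂ] Matrix m m ℂ) : Prop :=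
  ∀ X, X.PosSemidef → (Φ X).PosSemidef

/-- A trace-preserving map. -/
def TracePreserving {n m : Type*} [Fintype n] [Fintype m]
    (Φ : Matrix n n ℂ →ₗ[ℂ] Matrix m m ℂ) : Prop :=
  ∀ X, (Φ X).trace = X.trace

/-- The `n`-fold Kronecker power of a `d × d` matrix, realized on the index type
`Fin n → Fin d` (canonically identifying `ℂ^{d^n} ≅ (ℂ^d)^{⊗n}`). -/
noncomputable def kronPow {d : ℕ} (A : Matrix (Fin d) (Fin d) ℂ) (n : ℕ) :
    Matrix (Fin n → Fin d) (Fin n → Fin d) ℂ :=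
  Matrix.of fun x y => ∏ i, A (x i) (y i)


/-! With `λ = λ_min(ρ̂)` we have `λ • 1 ≤ ρ̂`; conjugating the diagonalisation of `ρ̂` by the
Kronecker power of its eigenbasis gives `λ ^ n • 1 ≤ ρ̂^{⊗n}`, hence `λ ^ n • ω ≤ ρ̂^{⊗n}` for
every free state `ω ≤ 1`. The remainder `ρ̂^{⊗n} - λ ^ n • ω` is positive with trace `1 - λ ^ n`,
and so is its image under `E`, whose overlap with `ψ` is at most its trace. Hence
`1 - ε ≤ ⟨ψ, E(ρ̂^{⊗n}) ψ⟩ ≤ λ ^ n f_ψ + (1 - λ ^ n)`; the logarithmic bound is a rearrangement. -/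

open scoped MatrixOrder
open Matrix

section KronPow

variable {d : ℕ}

lemma kronPow_mul (A B : Matrix (Fin d) (Fin d) ℂ) (n : ℕ) :
    kronPow (A * B) n = kronPow A n * kronPow B n := by
  ext x y
  simp only [kronPow, mul_apply, of_apply, Fintype.prod_sum, Finset.prod_mul_distrib]

lemma kronPow_conjTranspose (A : Matrix (Fin d) (Fin d) ℂ) (n : ℕ) :
    (kronPow A n)ᴴ = kronPow Aᴴ n := by
  ext x y
  simp [kronPow, conjTranspose_apply]

lemma kronPow_diagonal (v : Fin d → ℂ) (n : ℕ) :
    kronPow (diagonal v) n = diagonal fun x => ∏ i, v (x i) := by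
  ext x y
  by_cases hxy : x = y
  · simp [kronPow, hxy]
  · obtain ⟨i, hi⟩ := Function.ne_iff.mp hxy
    simp only [kronPow, of_apply, diagonal_apply_ne _ hxy]
    exact Finset.prod_eq_zero (Finset.mem_univ i) (diagonal_apply_ne _ hi)

lemma kronPow_one (n : ℕ) : kronPow (1 : Matrix (Fin d) (Fin d) ℂ) n = 1 := by
  simpa using kronPow_diagonal (fun _ => (1 : ℂ)) n

lemma trace_kronPow (A : Matrix (Fin d) (Fin d) ℂ) (n : ℕ) :
    (kronPow A n).trace = A.trace ^ n := by
  simp only [trace, diag, kronPow, of_apply]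
  rw [← Fintype.prod_sum fun (_ : Fin n) j => A j j, Fin.prod_const]

lemma Matrix.IsHermitian.algebraMap_pow_le_kronPow {A : Matrix (Fin d) (Fin d) ℂ}
    (hA : A.IsHermitian) {c : ℝ} (hc : 0 ≤ c) (hcA : ∀ i, c ≤ hA.eigenvalues i) (n : ℕ) :
    algebraMap ℝ _ (c ^ n) ≤ kronPow A n := by
  set V := kronPow (hA.eigenvectorUnitary : Matrix (Fin d) (Fin d) ℂ) n with hVdef
  have hV : V * Vᴴ = 1 := by
    rw [kronPow_conjTranspose, ← kronPow_mul, ← star_eq_conjTranspose,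
      Unitary.mul_star_self_of_mem hA.eigenvectorUnitary.2, kronPow_one]
  have hAV : kronPow A n =
      V * diagonal (fun x => ((∏ i, hA.eigenvalues (x i) : ℝ) : ℂ)) * Vᴴ := by
    conv_lhs => rw [hA.spectral_theorem, Unitary.conjStarAlgAut_apply]
    rw [kronPow_mul, kronPow_mul, kronPow_diagonal, star_eq_conjTranspose,
      ← kronPow_conjTranspose]
    simp [hVdef]
  have hcV : algebraMap ℝ _ (c ^ n) = V * algebraMap ℝ _ (c ^ n) * Vᴴ := by
    rw [← Algebra.commutes, mul_assoc, hV, mul_one]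
  have hdiag : algebraMap ℝ (Matrix (Fin n → Fin d) (Fin n → Fin d) ℂ) (c ^ n) ≤
      diagonal (fun x => ((∏ i, hA.eigenvalues (x i) : ℝ) : ℂ)) := by
    rw [le_iff, algebraMap_eq_diagonal, diagonal_sub, posSemidef_diagonal_iff]
    intro x
    rw [Pi.algebraMap_apply, Complex.coe_algebraMap, ← Complex.ofReal_sub, Complex.zero_le_real,
      sub_nonneg]
    calc c ^ n = ∏ _ : Fin n, c := by rw [Fin.prod_const]
      _ ≤ _ := Finset.prod_le_prod (fun _ _ => hc) fun i _ => hcA (x i)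
  have := star_left_conjugate_le_conjugate hdiag Vᴴ
  rw [star_eq_conjTranspose, conjTranspose_conjTranspose] at this
  rw [hcV, hAV]
  exact this

end KronPow

section Loewner

variable {m : Type*} [Fintype m]

lemma overlap_sub (A B : Matrix m m ℂ) (ψ : m → ℂ) :
    overlap (A - B) ψ = overlap A ψ - overlap B ψ := by
  simp [overlap, sub_mulVec, dotProduct_sub]

lemma overlap_real_smul (r : ℝ) (A : Matrix m m ℂ) (ψ : m → ℂ) :
    overlap (r • A) ψ = r * overlap A ψ := by
  simp [overlap, smul_mulVec, dotProduct_smul]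

lemma Matrix.PosSemidef.overlap_nonneg {A : Matrix m m ℂ} (hA : A.PosSemidef) (ψ : m → ℂ) :
    0 ≤ overlap A ψ :=
  hA.re_dotProduct_nonneg ψ

lemma overlap_mono {A B : Matrix m m ℂ} (hAB : A ≤ B) (ψ : m → ℂ) :
    overlap A ψ ≤ overlap B ψ :=
  sub_nonneg.mp (overlap_sub B A ψ ▸ (le_iff.mp hAB).overlap_nonneg ψ)

variable [DecidableEq m]

lemma overlap_algebraMap (r : ℝ) {ψ : m → ℂ} (hψ : star ψ ⬝ᵥ ψ = 1) :
    overlap (algebraMap ℝ (Matrix m m ℂ) r) ψ = r := by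
  simp [overlap, Algebra.algebraMap_eq_smul_one, smul_mulVec, hψ]

lemma Matrix.PosSemidef.le_algebraMap_trace_re {A : Matrix m m ℂ} (hA : A.PosSemidef) :
    A ≤ algebraMap ℝ _ A.trace.re := by
  refine le_algebraMap_of_spectrum_le (fun x hx => ?_) hA.isHermitian.isSelfAdjoint
  obtain ⟨i, rfl⟩ := hA.isHermitian.spectrum_real_eq_range_eigenvalues ▸ hx
  rw [hA.isHermitian.trace_eq_sum_eigenvalues]
  simpa using Finset.single_le_sum (fun j _ => hA.eigenvalues_nonneg j) (Finset.mem_univ i)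

lemma Matrix.PosSemidef.overlap_le_trace_re {A : Matrix m m ℂ} (hA : A.PosSemidef)
    {ψ : m → ℂ} (hψ : star ψ ⬝ᵥ ψ = 1) : overlap A ψ ≤ A.trace.re := by
  simpa only [overlap_algebraMap _ hψ] using overlap_mono hA.le_algebraMap_trace_re ψ

lemma IsDensity.overlap_le_one {ω : Matrix m m ℂ} (hω : IsDensity ω) {ψ : m → ℂ}
    (hψ : star ψ ⬝ᵥ ψ = 1) : overlap ω ψ ≤ 1 := by
  simpa [hω.2] using hω.1.overlap_le_trace_re hψ

lemma IsDensity.le_one {ω : Matrix m m ℂ} (hω : IsDensity ω) : ω ≤ 1 := by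
  simpa [hω.2] using hω.1.le_algebraMap_trace_re

lemma minEig_le_eigenvalues {A : Matrix m m ℂ} (hA : A.IsHermitian) (i : m) :
    minEig A ≤ hA.eigenvalues i := by
  rw [minEig, dif_pos hA]
  exact ciInf_le (Finite.bddBelow_range _) i

end Loewner

lemma PosMap.overlap_apply_le_of_smul_le {ι κ : Type*} [Fintype ι] [Fintype κ] [DecidableEq κ]
    {E : Matrix ι ι ℂ →ₗ[ℂ] Matrix κ κ ℂ} (hEpos : PosMap E) (hEtp : TracePreserving E)
    {ρ ω : Matrix ι ι ℂ} (hρ : ρ.trace = 1) (hω : ω.trace = 1) {c : ℝ} (hcω : c • ω ≤ ρ)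
    {ψ : κ → ℂ} (hψ : star ψ ⬝ᵥ ψ = 1) :
    overlap (E ρ) ψ ≤ c * overlap (E ω) ψ + (1 - c) := by
  have h := (hEpos _ (le_iff.mp hcω)).overlap_le_trace_re hψ
  rw [hEtp, trace_sub, trace_smul, hρ, hω, map_sub, LinearMap.map_smul_of_tower, overlap_sub,
    overlap_real_smul] at h
  simp only [Complex.sub_re, Complex.one_re, Complex.real_smul, mul_one,
    Complex.ofReal_re] at h
  linarith

section MaxOverlap

variable {m : Type*} [Fintype m] [DecidableEq m] {F : Set (Matrix m m ℂ)} {ψ : m → ℂ}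

lemma overlap_le_maxOverlap (hF : ∀ ω ∈ F, IsDensity ω) (hψ : star ψ ⬝ᵥ ψ = 1)
    {ω : Matrix m m ℂ} (hω : ω ∈ F) : overlap ω ψ ≤ maxOverlap F ψ := by
  refine le_csSup ⟨1, ?_⟩ ⟨ω, hω, rfl⟩
  rintro _ ⟨ω', hω', rfl⟩
  exact (hF ω' hω').overlap_le_one hψ

lemma maxOverlap_le_one (hF : ∀ ω ∈ F, IsDensity ω) (hψ : star ψ ⬝ᵥ ψ = 1) :
    maxOverlap F ψ ≤ 1 := by
  refine Real.sSup_le ?_ zero_le_one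
  rintro _ ⟨ω, hω, rfl⟩
  exact (hF ω hω).overlap_le_one hψ

end MaxOverlap

lemma Real.log_div_div_log_one_div_le {lam a ε : ℝ} {n : ℕ} (h0 : 0 < lam) (h1 : lam < 1)
    (hε : 0 < ε) (ha : 0 ≤ a) (h : lam ^ n * a ≤ ε) :
    Real.log (a / ε) / Real.log (1 / lam) ≤ n := by
  rcases ha.eq_or_lt with rfl | ha
  · simp
  have hlog : 0 < Real.log (1 / lam) := Real.log_pos (one_lt_one_div h0 h1)
  have hpow : a / ε ≤ (1 / lam) ^ n := by
    rw [div_le_iff₀ hε, _root_.one_div_pow, div_mul_eq_mul_div, one_mul,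
      le_div_iff₀ (pow_pos h0 n), mul_comm]
    exact h
  rw [div_le_iff₀ hlog, ← Real.log_pow]
  exact Real.log_le_log (div_pos ha hε) hpow

theorem distillation_overhead_deterministic_general {d d' : ℕ}
    (ρhat : Matrix (Fin d) (Fin d) ℂ) (hρ : IsDensity ρhat) (hρfull : 0 < minEig ρhat)
    (n : ℕ)
    (Fn : Set (Matrix (Fin n → Fin d) (Fin n → Fin d) ℂ)) (hFnne : Fn.Nonempty)
    (hFnden : ∀ ω ∈ Fn, IsDensity ω)
    (F' : Set (Matrix (Fin d') (Fin d') ℂ)) (hF'den : ∀ ω ∈ F', IsDensity ω)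
    (E : Matrix (Fin n → Fin d) (Fin n → Fin d) ℂ →ₗ[ℂ] Matrix (Fin d') (Fin d') ℂ)
    (hEpos : PosMap E) (hEtp : TracePreserving E)
    (hEfree : ∀ ω ∈ Fn, E ω ∈ F')
    (ψ : Fin d' → ℂ) (hψ : dotProduct (star ψ) ψ = 1)
    (ε : ℝ)
    (hfid : 1 - ε ≤ overlap (E (kronPow ρhat n)) ψ) :
    minEig ρhat ^ n * (1 - maxOverlap F' ψ) ≤ ε ∧
    (0 < ε → minEig ρhat < 1 →
      Real.log ((1 - maxOverlap F' ψ) / ε) / Real.log (1 / minEig ρhat) ≤ (n : ℝ)) := by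
  obtain ⟨ω, hω⟩ := hFnne
  have hc : 0 ≤ minEig ρhat ^ n := pow_nonneg hρfull.le n
  have hcω : minEig ρhat ^ n • ω ≤ kronPow ρhat n :=
    calc minEig ρhat ^ n • ω ≤ minEig ρhat ^ n • (1 : Matrix _ _ ℂ) :=
          smul_le_smul_of_nonneg_left (hFnden ω hω).le_one hc
      _ = algebraMap ℝ _ (minEig ρhat ^ n) := (Algebra.algebraMap_eq_smul_one _).symm
      _ ≤ kronPow ρhat n :=
          hρ.1.isHermitian.algebraMap_pow_le_kronPow hρfull.le (minEig_le_eigenvalues _) n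
  have hρn : (kronPow ρhat n).trace = 1 := by rw [trace_kronPow, hρ.2, one_pow]
  have hfree := overlap_le_maxOverlap hF'den hψ (hEfree ω hω)
  have hmain : minEig ρhat ^ n * (1 - maxOverlap F' ψ) ≤ ε := by
    linarith [hEpos.overlap_apply_le_of_smul_le hEtp hρn (hFnden ω hω).2 hcω hψ,
      mul_le_mul_of_nonneg_left hfree hc]
  exact ⟨hmain, fun hε hlam => Real.log_div_div_log_one_div_le hρfull hlam hε
    (sub_nonneg.mpr (maxOverlap_le_one hF'den hψ)) hmain⟩

/-- **Theorem 2, deterministic case.**  Lower bound on the distillation overhead: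
`ε ≥ λ_min(ρ̂)^n (1 - f_ψ)`; equivalently, if `ε > 0` and `λ_min(ρ̂) < 1`, then
`n ≥ log((1 - f_ψ)/ε) / log(1/λ_min(ρ̂))`. -/
theorem distillation_overhead_deterministic {d d' : ℕ}
    (ρhat : Matrix (Fin d) (Fin d) ℂ) (hρ : IsDensity ρhat) (hρfull : 0 < minEig ρhat)
    (n : ℕ) (hn : 1 ≤ n)
    (Fn : Set (Matrix (Fin n → Fin d) (Fin n → Fin d) ℂ)) (hFnne : Fn.Nonempty)
    (hFnden : ∀ ω ∈ Fn, IsDensity ω)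
    (F' : Set (Matrix (Fin d') (Fin d') ℂ)) (hF'den : ∀ ω ∈ F', IsDensity ω)
    (E : Matrix (Fin n → Fin d) (Fin n → Fin d) ℂ →ₗ[ℂ] Matrix (Fin d') (Fin d') ℂ)
    (hEpos : PosMap E) (hEtp : TracePreserving E)
    (hEfree : ∀ ω ∈ Fn, E ω ∈ F')
    (ψ : Fin d' → ℂ) (hψ : dotProduct (star ψ) ψ = 1)
    (ε : ℝ) (hε : 0 ≤ ε)
    (hfid : 1 - ε ≤ overlap (E (kronPow ρhat n)) ψ) :
    minEig ρhat ^ n * (1 - maxOverlap F' ψ) ≤ ε ∧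
    (0 < ε → minEig ρhat < 1 →
      Real.log ((1 - maxOverlap F' ψ) / ε) / Real.log (1 / minEig ρhat) ≤ (n : ℝ)) :=
  distillation_overhead_deterministic_general ρhat hρ hρfull n Fn hFnne hFnden F' hF'den E hEpos
    hEtp hEfree ψ hψ ε hfid
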